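/- arXiv:2402.07968 — 8 statements merged into one kernel-verified Lean document; each statement's English description precedes it below -/
import Mathlib

section
/- For every nontrivial connected graph G, the total Roman {2}-domination number satisfies γ_t(G) ≤ γ_{tR2}(G) ≤ 2·γ_t(G), where γ_t(G) is the total domination number. -/
/-- `f` is a total Roman {2}-dominating function on `G`. -/
def IsTR2DF {V : Type*} (G : SimpleGraph V) (f : V → ℕ) : Prop :=
  (∀ v, f v ≤ 2) ∧
  (∀ v, f v = 0 →
    (∃ u, G.Adj u v ∧ f u = 2) ∨
    (∃ x y, x ≠ y ∧ G.Adj x v ∧ G.Adj y v ∧ f x = 1 ∧ f y = 1)) ∧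
  (∀ v, 0 < f v → ∃ u, G.Adj u v ∧ 0 < f u)

/-- The total Roman {2}-domination number of `G`. -/
noncomputable def tR2 {V : Type*} [Fintype V] (G : SimpleGraph V) : ℕ :=
  sInf {w | ∃ f : V → ℕ, IsTR2DF G f ∧ ∑ v, f v = w}

/-- The total domination number of `G`. -/
noncomputable def totalDomNum {V : Type*} [Fintype V] (G : SimpleGraph V) : ℕ :=
  sInf {k | ∃ S : Finset V, (∀ v : V, ∃ u ∈ S, G.Adj u v) ∧ S.card = k}

/-
The support of a total Roman {2}-dominating function is a total dominating set, and its size is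
at most the weight of the function; conversely, twice the indicator of a total dominating set is a
total Roman {2}-dominating function. If `G` has no total dominating set it has no such function
either, and both invariants take the junk value `sInf ∅ = 0`.
-/

theorem Nat.sInf_le_mul_sInf {A B : Set ℕ} (c : ℕ) (hAB : ∀ a ∈ A, ∃ b ∈ B, b ≤ c * a)
    (hBA : B.Nonempty → A.Nonempty) : sInf B ≤ c * sInf A := by
  rcases A.eq_empty_or_nonempty with hA | hA
  · have hB : B = ∅ := Set.not_nonempty_iff_eq_empty.mp fun hB => by simpa [hA] using hBA hB
    simp [hB]
  · obtain ⟨b, hb, hle⟩ := hAB _ (Nat.sInf_mem hA)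
    exact (Nat.sInf_le hb).trans hle

theorem Finset.card_filter_pos_le_sum {ι : Type*} (s : Finset ι) (f : ι → ℕ) :
    (s.filter (0 < f ·)).card ≤ ∑ i ∈ s, f i := by
  calc (s.filter (0 < f ·)).card = ∑ i ∈ s.filter (0 < f ·), 1 := by simp
    _ ≤ ∑ i ∈ s.filter (0 < f ·), f i := Finset.sum_le_sum fun i hi => (Finset.mem_filter.mp hi).2
    _ ≤ ∑ i ∈ s, f i := Finset.sum_le_sum_of_subset (Finset.filter_subset _ _)

namespace SimpleGraph

variable {V : Type*} (G : SimpleGraph V)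

def IsTotalDominating (S : Finset V) : Prop :=
  ∀ v, ∃ u ∈ S, G.Adj u v

variable {G}

theorem IsTotalDominating.isTR2DF_two_indicator [DecidableEq V] {S : Finset V}
    (hS : G.IsTotalDominating S) : IsTR2DF G fun v => if v ∈ S then 2 else 0 := by
  refine ⟨fun v => by dsimp only; split_ifs <;> omega, fun v _ => ?_, fun v _ => ?_⟩
  · obtain ⟨u, hu, hadj⟩ := hS v
    exact Or.inl ⟨u, hadj, if_pos hu⟩
  · obtain ⟨u, hu, hadj⟩ := hS v
    exact ⟨u, hadj, by simp [hu]⟩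

end SimpleGraph

theorem IsTR2DF.isTotalDominating_support {V : Type*} [Fintype V] {G : SimpleGraph V}
    {f : V → ℕ} (hf : IsTR2DF G f) :
    G.IsTotalDominating (Finset.univ.filter (0 < f ·)) := by
  obtain ⟨-, hzero, hpos⟩ := hf
  intro v
  rcases Nat.eq_zero_or_pos (f v) with hv | hv
  · rcases hzero v hv with ⟨u, hadj, hu⟩ | ⟨x, -, -, hadj, -, hx, -⟩
    · exact ⟨u, by simp [hu], hadj⟩
    · exact ⟨x, by simp [hx], hadj⟩
  · obtain ⟨u, hadj, hu⟩ := hpos v hv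
    exact ⟨u, by simp [hu], hadj⟩

theorem stmt0_general {V : Type*} [Fintype V] (G : SimpleGraph V) :
    totalDomNum G ≤ tR2 G ∧ tR2 G ≤ 2 * totalDomNum G := by
  classical
  have support_mem (f : V → ℕ) (hf : IsTR2DF G f) :
      (Finset.univ.filter (0 < f ·)).card ∈
        {k | ∃ S : Finset V, G.IsTotalDominating S ∧ S.card = k} :=
    ⟨_, hf.isTotalDominating_support, rfl⟩
  have indicator_mem (S : Finset V) (hS : G.IsTotalDominating S) :
      2 * S.card ∈ {w | ∃ f : V → ℕ, IsTR2DF G f ∧ ∑ v, f v = w} :=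
    ⟨_, hS.isTR2DF_two_indicator, by simp [Finset.sum_ite_mem, mul_comm]⟩
  rw [tR2, totalDomNum]
  constructor
  · refine le_of_le_of_eq (Nat.sInf_le_mul_sInf 1 ?_ ?_) (one_mul _)
    · rintro _ ⟨f, hf, rfl⟩
      exact ⟨_, support_mem f hf, by simpa using Finset.card_filter_pos_le_sum _ f⟩
    · exact fun ⟨_, S, hS, _⟩ => ⟨_, indicator_mem S hS⟩
  · exact Nat.sInf_le_mul_sInf 2 (fun _ ⟨S, hS, hk⟩ => ⟨_, indicator_mem S hS, hk ▸ le_rfl⟩)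
      (fun ⟨_, f, hf, _⟩ => ⟨_, support_mem f hf⟩)

theorem stmt0 {V : Type*} [Fintype V] (G : SimpleGraph V)
    (hconn : G.Connected) (hnt : Nontrivial V) :
    totalDomNum G ≤ tR2 G ∧ tR2 G ≤ 2 * totalDomNum G :=
  stmt0_general G
end

section
/- For every nontrivial connected graph G, γ_{tR2}(G) ≤ 3·γ(G), where γ(G) is the domination number. -/
/-- The domination number of `G`. -/
noncomputable def domNum {V : Type*} [Fintype V] (G : SimpleGraph V) : ℕ :=
  sInf {k | ∃ S : Finset V, (∀ v : V, v ∉ S → ∃ u ∈ S, G.Adj u v) ∧ S.card = k}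


/-!
Take a minimum dominating set `S` and, as `G` has no isolated vertices, a neighbour `nb s` of
each `s ∈ S`. Assigning `2` to `S`, `1` to the chosen neighbours outside `S` and `0` elsewhere
gives a total Roman {2}-dominating function: a vertex outside `S` is adjacent to a `2`, each
`s ∈ S` is adjacent to the positive vertex `nb s`, and each `nb s` is adjacent to `s`.
Its weight is at most `2 |S| + |S|`.
-/

open Finset

namespace SimpleGraph

variable {V : Type*} {G : SimpleGraph V}

def IsDominatingSet (G : SimpleGraph V) (S : Finset V) : Prop :=
  ∀ v, v ∉ S → ∃ u ∈ S, G.Adj u v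

theorem tR2_le_sum [Fintype V] {f : V → ℕ} (hf : IsTR2DF G f) : tR2 G ≤ ∑ v, f v :=
  Nat.sInf_le ⟨f, hf, rfl⟩

theorem exists_isDominatingSet_card_eq_domNum [Fintype V] (G : SimpleGraph V) :
    ∃ S : Finset V, G.IsDominatingSet S ∧ #S = domNum G := by
  have hne : {k | ∃ S : Finset V, G.IsDominatingSet S ∧ #S = k}.Nonempty :=
    ⟨_, univ, fun v hv => absurd (mem_univ v) hv, rfl⟩
  exact Nat.sInf_mem hne

section Construction

variable [DecidableEq V] (S : Finset V) (nb : V → V)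

def tr2DFOfDominating : V → ℕ :=
  fun v => if v ∈ S then 2 else if v ∈ S.image nb then 1 else 0

theorem isTR2DF_tr2DFOfDominating (hS : G.IsDominatingSet S)
    (hnb : ∀ v, G.Adj v (nb v)) : IsTR2DF G (tr2DFOfDominating S nb) := by
  refine ⟨fun v => ?_, fun v hv => Or.inl ?_, fun v hv => ?_⟩
  · unfold tr2DFOfDominating; split_ifs <;> omega
  · have hvS : v ∉ S := fun h => by simp [tr2DFOfDominating, h] at hv
    obtain ⟨u, huS, hu⟩ := hS v hvS
    exact ⟨u, hu, by simp [tr2DFOfDominating, huS]⟩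
  · by_cases hvS : v ∈ S
    · refine ⟨nb v, (hnb v).symm, ?_⟩
      have hnbv : nb v ∈ S.image nb := mem_image_of_mem nb hvS
      unfold tr2DFOfDominating; split_ifs <;> omega
    · have hvI : v ∈ S.image nb := by
        by_contra h
        simp [tr2DFOfDominating, hvS, h] at hv
      obtain ⟨u, huS, rfl⟩ := mem_image.mp hvI
      exact ⟨u, hnb u, by simp [tr2DFOfDominating, huS]⟩

theorem sum_tr2DFOfDominating_le [Fintype V] : ∑ v, tr2DFOfDominating S nb v ≤ 3 * #S := by
  have hle : ∀ v, tr2DFOfDominating S nb v ≤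
      (if v ∈ S then 2 else 0) + (if v ∈ S.image nb then 1 else 0) := by
    intro v; unfold tr2DFOfDominating; split_ifs <;> omega
  calc ∑ v, tr2DFOfDominating S nb v
      ≤ ∑ v, ((if v ∈ S then 2 else 0) + (if v ∈ S.image nb then 1 else 0)) :=
        sum_le_sum fun v _ => hle v
    _ = 2 * #S + #(S.image nb) := by
        simp only [sum_add_distrib, sum_ite_mem, univ_inter, sum_const, smul_eq_mul]
        ring
    _ ≤ 3 * #S := by have := card_image_le (s := S) (f := nb); omega

end Construction

theorem tR2_le_three_mul_card_of_isDominatingSet [Fintype V] (hG : ∀ v, ∃ u, G.Adj v u)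
    {S : Finset V} (hS : G.IsDominatingSet S) : tR2 G ≤ 3 * #S := by
  classical
  choose nb hnb using hG
  exact (tR2_le_sum (isTR2DF_tr2DFOfDominating S nb hS hnb)).trans
    (sum_tr2DFOfDominating_le S nb)

end SimpleGraph

theorem stmt1 {V : Type*} [Fintype V] (G : SimpleGraph V)
    (hconn : G.Connected) (hnt : Nontrivial V) :
    tR2 G ≤ 3 * domNum G := by
  obtain ⟨S, hS, hcard⟩ := G.exists_isDominatingSet_card_eq_domNum
  rw [← hcard]
  exact SimpleGraph.tR2_le_three_mul_card_of_isDominatingSet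
    hconn.preconnected.exists_adj_of_nontrivial hS
end

section
/- Let G be a nontrivial connected graph and let f = (V_0, V_1, V_2) be a minimum-weight total Roman {2}-dominating function chosen with |V_2| as small as possible. Then each vertex in V_2 has at least two private neighbors in V_0 with respect to V_2, i.e., for each v ∈ V_2 there exist at least two vertices w ∈ V_0 with N(w) ∩ V_2 = {v}. -/
/-!
Lower `f v` from 2 to 1 and raise every private neighbour of `v` from 0 to 1. The result is
again a TR2DF: a vertex of `V₀` adjacent to `v` that is not private keeps a second neighbour
in `V₂`, and the raised vertices are totally dominated by `v`. The new function has weight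
`w(f) - 1 + #(private neighbours of v)` and one vertex fewer in `V₂`. With no private
neighbour this contradicts the minimality of the weight, with exactly one it contradicts the
minimality of `|V₂|`.
-/

open Finset

namespace IsTR2DF

variable {V : Type*} (G : SimpleGraph V) (f : V → ℕ) (v : V)

def IsPrivateNbr (w : V) : Prop :=
  f w = 0 ∧ G.Adj w v ∧ ∀ u, f u = 2 → G.Adj w u → u = v

open Classical in
noncomputable def privateNbrs [Fintype V] : Finset V :=
  univ.filter (IsPrivateNbr G f v)

open Classical in
noncomputable def shareWithPrivateNbrs (x : V) : ℕ :=
  if x = v ∨ IsPrivateNbr G f v x then 1 else f x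

variable {G f v}

theorem mem_privateNbrs [Fintype V] {w : V} : w ∈ privateNbrs G f v ↔ IsPrivateNbr G f v w := by
  simp [privateNbrs]

theorem shareWithPrivateNbrs_of_not {x : V} (hxv : x ≠ v) (hx : ¬IsPrivateNbr G f v x) :
    shareWithPrivateNbrs G f v x = f x := by
  simp [shareWithPrivateNbrs, hxv, hx]

theorem shareWithPrivateNbrs_eq_two_iff {x : V} :
    shareWithPrivateNbrs G f v x = 2 ↔ f x = 2 ∧ x ≠ v := by
  by_cases hxv : x = v
  · simp [shareWithPrivateNbrs, hxv]
  by_cases hx : IsPrivateNbr G f v x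
  · simp [shareWithPrivateNbrs, hx, hx.1]
  · simp [shareWithPrivateNbrs_of_not hxv hx, hxv]

theorem shareWithPrivateNbrs_eq_one {x : V} (hx : f x = 1) : shareWithPrivateNbrs G f v x = 1 := by
  unfold shareWithPrivateNbrs
  split_ifs <;> simp_all

theorem shareWithPrivateNbrs_pos {x : V} (hx : 0 < f x) : 0 < shareWithPrivateNbrs G f v x := by
  unfold shareWithPrivateNbrs
  split_ifs <;> omega

theorem eq_zero_of_shareWithPrivateNbrs_eq_zero {x : V} (hx : shareWithPrivateNbrs G f v x = 0) :
    f x = 0 ∧ x ≠ v ∧ ¬IsPrivateNbr G f v x := by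
  unfold shareWithPrivateNbrs at hx
  split_ifs at hx with h
  exact ⟨hx, by tauto, by tauto⟩

theorem shareWithPrivateNbrs_isTR2DF (hf : IsTR2DF G f) (hv : f v = 2) :
    IsTR2DF G (shareWithPrivateNbrs G f v) := by
  obtain ⟨hf_le, hf_dom, hf_total⟩ := hf
  refine ⟨fun x => ?_, fun x hx => ?_, fun x hx => ?_⟩
  · unfold shareWithPrivateNbrs
    split_ifs
    exacts [by norm_num, hf_le x]
  · obtain ⟨hx0, hxv, hxp⟩ := eq_zero_of_shareWithPrivateNbrs_eq_zero hx
    rcases hf_dom x hx0 with ⟨u, hux, hu2⟩ | ⟨a, b, hab, hax, hbx, ha1, hb1⟩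
    · left
      -- if the dominating vertex is `v` itself, `x` is not private, so it sees another vertex of `V₂`
      obtain ⟨u', hu'2, hxu', hu'v⟩ : ∃ u', f u' = 2 ∧ G.Adj x u' ∧ u' ≠ v := by
        by_cases huv : u = v
        · subst huv
          simpa [IsPrivateNbr, hx0, hux.symm] using hxp
        · exact ⟨u, hu2, hux.symm, huv⟩
      exact ⟨u', hxu'.symm, shareWithPrivateNbrs_eq_two_iff.2 ⟨hu'2, hu'v⟩⟩
    · exact Or.inr ⟨a, b, hab, hax, hbx, shareWithPrivateNbrs_eq_one ha1,
        shareWithPrivateNbrs_eq_one hb1⟩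
  · by_cases hxv : x = v
    · subst hxv
      obtain ⟨u, hux, hu⟩ := hf_total x (by omega)
      exact ⟨u, hux, shareWithPrivateNbrs_pos hu⟩
    by_cases hxp : IsPrivateNbr G f v x
    · exact ⟨v, hxp.2.1.symm, shareWithPrivateNbrs_pos (by omega)⟩
    · rw [shareWithPrivateNbrs_of_not hxv hxp] at hx
      obtain ⟨u, hux, hu⟩ := hf_total x hx
      exact ⟨u, hux, shareWithPrivateNbrs_pos hu⟩

theorem sum_shareWithPrivateNbrs [Fintype V] (hv : f v = 2) :
    ∑ x, shareWithPrivateNbrs G f v x + 1 = ∑ x, f x + #(privateNbrs G f v) := by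
  classical
  have hpoint : ∀ x, shareWithPrivateNbrs G f v x + (if x = v then 1 else 0) =
      f x + (if IsPrivateNbr G f v x then 1 else 0) := by
    intro x
    by_cases hxv : x = v
    · subst hxv
      have : ¬IsPrivateNbr G f x x := fun h => by have := h.1; omega
      simp [shareWithPrivateNbrs, this, hv]
    by_cases hxp : IsPrivateNbr G f v x
    · simp [shareWithPrivateNbrs, hxv, hxp, hxp.1]
    · simp [shareWithPrivateNbrs_of_not hxv hxp, hxv, hxp]
  have := Finset.sum_congr rfl fun x (_ : x ∈ univ) => hpoint x
  rw [sum_add_distrib, sum_add_distrib, sum_ite_eq', sum_boole] at this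
  simpa [privateNbrs] using this

theorem filter_shareWithPrivateNbrs_eq_two [Fintype V] [DecidableEq V] :
    univ.filter (fun x => shareWithPrivateNbrs G f v x = 2) =
      (univ.filter fun x => f x = 2).erase v := by
  ext x
  simp [shareWithPrivateNbrs_eq_two_iff, and_comm]

end IsTR2DF

theorem stmt3_general {V : Type*} [Fintype V] (G : SimpleGraph V)
    (f : V → ℕ)
    (hf : IsTR2DF G f) (hmin : ∑ v, f v = tR2 G)
    (hV2 : ∀ g : V → ℕ, IsTR2DF G g → ∑ v, g v = tR2 G →
      (Finset.univ.filter fun v => f v = 2).card ≤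
        (Finset.univ.filter fun v => g v = 2).card) :
    ∀ v, f v = 2 → ∃ w₁ w₂ : V, w₁ ≠ w₂ ∧
      f w₁ = 0 ∧ f w₂ = 0 ∧ G.Adj w₁ v ∧ G.Adj w₂ v ∧
      (∀ u, f u = 2 → G.Adj w₁ u → u = v) ∧
      (∀ u, f u = 2 → G.Adj w₂ u → u = v) := by
  classical
  intro v hv
  set g := IsTR2DF.shareWithPrivateNbrs G f v
  have hg : IsTR2DF G g := hf.shareWithPrivateNbrs_isTR2DF hv
  have hg_sum : ∑ x, g x + 1 = ∑ x, f x + #(IsTR2DF.privateNbrs G f v) :=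
    IsTR2DF.sum_shareWithPrivateNbrs hv
  have hg_weight : tR2 G ≤ ∑ x, g x := Nat.sInf_le ⟨g, hg, rfl⟩
  have hv_mem : v ∈ univ.filter fun x => f x = 2 := by simp [hv]
  have hcard : 1 < #(IsTR2DF.privateNbrs G f v) := by
    by_contra! hle
    have hV2g := hV2 g hg (by omega)
    rw [IsTR2DF.filter_shareWithPrivateNbrs_eq_two, card_erase_of_mem hv_mem] at hV2g
    have := card_pos.2 ⟨v, hv_mem⟩
    omega
  obtain ⟨w₁, hw₁, w₂, hw₂, hne⟩ := one_lt_card.1 hcard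
  obtain ⟨hw₁0, hw₁v, hw₁p⟩ := IsTR2DF.mem_privateNbrs.1 hw₁
  obtain ⟨hw₂0, hw₂v, hw₂p⟩ := IsTR2DF.mem_privateNbrs.1 hw₂
  exact ⟨w₁, w₂, hne, hw₁0, hw₂0, hw₁v, hw₂v, hw₁p, hw₂p⟩

theorem stmt3 {V : Type*} [Fintype V] [DecidableEq V] (G : SimpleGraph V)
    (hconn : G.Connected) (hnt : Nontrivial V) (f : V → ℕ)
    (hf : IsTR2DF G f) (hmin : ∑ v, f v = tR2 G)
    (hV2 : ∀ g : V → ℕ, IsTR2DF G g → ∑ v, g v = tR2 G →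
      (Finset.univ.filter fun v => f v = 2).card ≤
        (Finset.univ.filter fun v => g v = 2).card) :
    ∀ v, f v = 2 → ∃ w₁ w₂ : V, w₁ ≠ w₂ ∧
      f w₁ = 0 ∧ f w₂ = 0 ∧ G.Adj w₁ v ∧ G.Adj w₂ v ∧
      (∀ u, f u = 2 → G.Adj w₁ u → u = v) ∧
      (∀ u, f u = 2 → G.Adj w₂ u → u = v) :=
  stmt3_general G f hf hmin hV2
end

section
/- Let G be a nontrivial connected graph with maximum degree Δ(G) ≤ 2. Then there exists a minimum-weight total Roman {2}-dominating function f = (V_0, V_1, V_2) on G with V_2 = ∅. -/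
/-!
Every total Roman {2}-dominating function `f` can be rid of its `2`s without gaining weight;
applied to a minimum one this gives the theorem. Let `f v = 2`. By totality `v` has a positive
neighbour, so, having degree at most two, it has at most one neighbour `w` with `f w = 0`. If
there is such a `w`, relabel `v, w` from `2, 0` to `1, 1` (raising values never breaks the
conditions, and afterwards `v` has no neighbour of value `0`); otherwise just lower `v` to `1`.
Both moves keep `∑ f` from growing and strictly decrease `∑ f ^ 2`, so the process terminates.
-/

open Finset Function

lemma Finset.sum_comp_update_add {ι α M : Type*} [Fintype ι] [DecidableEq ι] [AddCommMonoid M]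
    (φ : α → M) (f : ι → α) (i : ι) (b : α) :
    ∑ x, φ (update f i b x) + φ (f i) = ∑ x, φ (f x) + φ b := by
  simp only [apply_update (fun _ => φ), sum_update_of_mem (mem_univ i), sdiff_singleton_eq_erase]
  rw [add_assoc, sum_erase_add _ _ (mem_univ i), add_comm]

lemma SimpleGraph.eq_or_eq_of_adj_of_degree_le_two {V : Type*} {G : SimpleGraph V} {v u w z : V}
    [Fintype (G.neighborSet v)] (hv : G.degree v ≤ 2) (huw : u ≠ w) (hu : G.Adj v u)
    (hw : G.Adj v w) (hz : G.Adj v z) : z = u ∨ z = w := by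
  by_contra! h
  have : 2 < (G.neighborFinset v).card :=
    two_lt_card.mpr ⟨u, by simpa, w, by simpa, z, by simpa, huw, h.1.symm, h.2.symm⟩
  rw [card_neighborFinset_eq_degree] at this
  omega

section

variable {V : Type*} {G : SimpleGraph V} {f g : V → ℕ}

theorem IsTR2DF.of_le (hf : IsTR2DF G f) (hfg : ∀ v, f v ≤ g v) (hg : ∀ v, g v ≤ 2) :
    IsTR2DF G g := by
  obtain ⟨-, hzero, htotal⟩ := hf
  refine ⟨hg, fun v hv => ?_, fun v hv => ?_⟩
  · rcases hzero v (by have := hfg v; omega) with ⟨u, hu, hu2⟩ | ⟨x, y, hxy, hx, hy, hx1, hy1⟩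
    · exact .inl ⟨u, hu, by have := hfg u; have := hg u; omega⟩
    · by_cases hx2 : g x = 2
      · exact .inl ⟨x, hx, hx2⟩
      by_cases hy2 : g y = 2
      · exact .inl ⟨y, hy, hy2⟩
      refine .inr ⟨x, y, hxy, hx, hy, ?_, ?_⟩
      · have := hfg x; have := hg x; omega
      · have := hfg y; have := hg y; omega
  · -- a vertex raised from `0` is dominated in `f`, so it already has a positive neighbour
    by_cases hfv : 0 < f v
    · obtain ⟨u, hu, hfu⟩ := htotal v hfv
      exact ⟨u, hu, hfu.trans_le (hfg u)⟩
    rcases hzero v (by omega) with ⟨u, hu, hu2⟩ | ⟨x, y, -, hx, -, hx1, -⟩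
    · exact ⟨u, hu, by have := hfg u; omega⟩
    · exact ⟨x, hx, by have := hfg x; omega⟩

theorem isTR2DF_one (hG : ∀ v, ∃ u, G.Adj v u) : IsTR2DF G 1 := by
  refine ⟨fun _ => one_le_two, fun v hv => absurd hv one_ne_zero, fun v _ => ?_⟩
  obtain ⟨u, hu⟩ := hG v
  exact ⟨u, hu.symm, Nat.one_pos⟩

theorem tR2_le [Fintype V] (hf : IsTR2DF G f) : tR2 G ≤ ∑ x, f x :=
  Nat.sInf_le ⟨f, hf, rfl⟩

theorem exists_isTR2DF_sum_eq_tR2 [Fintype V] (hG : ∀ v, ∃ u, G.Adj v u) :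
    ∃ f, IsTR2DF G f ∧ ∑ x, f x = tR2 G := by
  have hne : {w | ∃ f : V → ℕ, IsTR2DF G f ∧ ∑ v, f v = w}.Nonempty :=
    ⟨_, 1, isTR2DF_one hG, rfl⟩
  exact Nat.sInf_mem hne

variable [DecidableEq V]

theorem IsTR2DF.update_one_of_adj_pos (hf : IsTR2DF G f) {v : V} (hv : f v = 2)
    (hnbr : ∀ w, G.Adj v w → 0 < f w) : IsTR2DF G (update f v 1) := by
  obtain ⟨hle, hzero, htotal⟩ := hf
  have hval : ∀ x, x ≠ v → update f v 1 x = f x := fun x hx => update_of_ne hx _ _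
  refine ⟨fun x => ?_, fun x hx => ?_, fun x hx => ?_⟩
  · rcases eq_or_ne x v with rfl | hxv
    · simp
    · rw [hval x hxv]; exact hle x
  · have hxv : x ≠ v := by rintro rfl; simp at hx
    rw [hval x hxv] at hx
    rcases hzero x hx with ⟨u, hu, hu2⟩ | ⟨y, z, hyz, hy, hz, hy1, hz1⟩
    · have huv : u ≠ v := by rintro rfl; have := hnbr x hu; omega
      exact .inl ⟨u, hu, by rwa [hval u huv]⟩
    · have hyv : y ≠ v := by rintro rfl; omega
      have hzv : z ≠ v := by rintro rfl; omega
      exact .inr ⟨y, z, hyz, hy, hz, by rwa [hval y hyv], by rwa [hval z hzv]⟩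
  · have hpos : ∀ y, 0 < f y → 0 < update f v 1 y := by
      intro y hy
      rcases eq_or_ne y v with rfl | hyv
      · simp
      · rwa [hval y hyv]
    have hfx : 0 < f x := by
      rcases eq_or_ne x v with rfl | hxv
      · omega
      · rwa [hval x hxv] at hx
    obtain ⟨u, hu, hfu⟩ := htotal x hfx
    exact ⟨u, hu, hpos u hfu⟩

variable [Fintype V] [DecidableRel G.Adj]

theorem IsTR2DF.exists_sum_le_sum_sq_lt (hf : IsTR2DF G f) {v : V}
    (hv : f v = 2) (hdeg : G.degree v ≤ 2) :
    ∃ g, IsTR2DF G g ∧ ∑ x, g x ≤ ∑ x, f x ∧ ∑ x, g x ^ 2 < ∑ x, f x ^ 2 := by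
  by_cases hN : ∃ w, G.Adj v w ∧ f w = 0
  · obtain ⟨w, hvw, hw⟩ := hN
    have hwv : w ≠ v := by rintro rfl; omega
    obtain ⟨u, huv, hu⟩ := hf.2.2 v (by omega)
    have huw : u ≠ w := by rintro rfl; omega
    set f' := update f w 1
    have hf' : IsTR2DF G f' := hf.of_le
      (fun x => by rcases eq_or_ne x w with rfl | hxw <;> simp [f', *])
      (fun x => by rcases eq_or_ne x w with rfl | hxw <;> simp [f', *, hf.1 x])
    have hf'v : f' v = 2 := by simp [f', hwv.symm, hv]
    have hf'nbr : ∀ z, G.Adj v z → 0 < f' z := by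
      intro z hz
      rcases G.eq_or_eq_of_adj_of_degree_le_two hdeg huw huv.symm hvw hz with rfl | rfl
      · simpa [f', huw] using hu
      · simp [f']
    refine ⟨update f' v 1, hf'.update_one_of_adj_pos hf'v hf'nbr, ?_⟩
    have e₁ : ∑ x, update f' v 1 x + f' v = ∑ x, f' x + 1 := sum_comp_update_add id f' v 1
    have e₂ : ∑ x, f' x + f w = ∑ x, f x + 1 := sum_comp_update_add id f w 1
    have e₃ : ∑ x, update f' v 1 x ^ 2 + f' v ^ 2 = ∑ x, f' x ^ 2 + 1 ^ 2 :=
      sum_comp_update_add (· ^ 2) f' v 1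
    have e₄ : ∑ x, f' x ^ 2 + f w ^ 2 = ∑ x, f x ^ 2 + 1 ^ 2 := sum_comp_update_add (· ^ 2) f w 1
    simp only [hf'v, hw] at e₁ e₂ e₃ e₄
    omega
  · push Not at hN
    refine ⟨update f v 1, hf.update_one_of_adj_pos hv fun w hw => Nat.pos_of_ne_zero (hN w hw), ?_⟩
    have e₁ : ∑ x, update f v 1 x + f v = ∑ x, f x + 1 := sum_comp_update_add id f v 1
    have e₂ : ∑ x, update f v 1 x ^ 2 + f v ^ 2 = ∑ x, f x ^ 2 + 1 ^ 2 :=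
      sum_comp_update_add (· ^ 2) f v 1
    simp only [hv] at e₁ e₂
    omega

theorem IsTR2DF.exists_sum_le_forall_ne_two (hdeg : ∀ v, G.degree v ≤ 2) (hf : IsTR2DF G f) :
    ∃ g, IsTR2DF G g ∧ ∑ x, g x ≤ ∑ x, f x ∧ ∀ v, g v ≠ 2 := by
  induction hn : ∑ x, f x ^ 2 using Nat.strong_induction_on generalizing f with
  | _ n ih =>
    by_cases htwo : ∃ v, f v = 2
    · obtain ⟨v, hv⟩ := htwo
      obtain ⟨g, hg, hgf, hsq⟩ := hf.exists_sum_le_sum_sq_lt hv (hdeg v)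
      obtain ⟨k, hk, hkg, hk2⟩ := ih _ (hn ▸ hsq) hg rfl
      exact ⟨k, hk, hkg.trans hgf, hk2⟩
    · push Not at htwo
      exact ⟨f, hf, le_rfl, htwo⟩

end

theorem stmt4 {V : Type*} [Fintype V] {G : SimpleGraph V} [DecidableRel G.Adj]
    (hconn : G.Connected) (hnt : Nontrivial V) (hΔ : G.maxDegree ≤ 2) :
    ∃ f : V → ℕ, IsTR2DF G f ∧ ∑ v, f v = tR2 G ∧ ∀ v, f v ≠ 2 := by
  classical
  obtain ⟨f, hf, hfw⟩ := exists_isTR2DF_sum_eq_tR2 hconn.preconnected.exists_adj_of_nontrivial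
  obtain ⟨g, hg, hgf, hg2⟩ :=
    hf.exists_sum_le_forall_ne_two fun v => (G.degree_le_maxDegree v).trans hΔ
  exact ⟨g, hg, le_antisymm (hfw ▸ hgf) (tR2_le hg), hg2⟩
end

section
/- For the path P_n with n ≥ 2, the total Roman {2}-domination number equals ⌈(2n+2)/3⌉. -/
open Finset SimpleGraph

theorem isTR2DF_iff_sum_neighborFinset {V : Type*} {G : SimpleGraph V} [G.LocallyFinite]
    {f : V → ℕ} :
    IsTR2DF G f ↔ (∀ v, f v ≤ 2) ∧ (∀ v, f v = 0 → 2 ≤ ∑ u ∈ G.neighborFinset v, f u) ∧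
      ∀ v, 0 < f v → 0 < ∑ u ∈ G.neighborFinset v, f u := by
  classical
  refine and_congr_right fun hle => and_congr (forall₂_congr fun v _ => ?_)
    (forall₂_congr fun v _ => ?_)
  · constructor
    · rintro (⟨u, huv, hu⟩ | ⟨x, y, hxy, hx, hy, hx1, hy1⟩)
      · calc 2 = f u := hu.symm
          _ ≤ _ := single_le_sum (fun _ _ => Nat.zero_le _) (by simpa using huv.symm)
      · calc 2 = ∑ u ∈ {x, y}, f u := by rw [sum_pair hxy, hx1, hy1]
          _ ≤ _ := sum_le_sum_of_subset <| insert_subset (by simpa using hx.symm)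
              (singleton_subset_iff.2 (by simpa using hy.symm))
    · intro h
      refine or_iff_not_imp_left.2 fun h2 => ?_
      push Not at h2
      have hle1 : ∀ u ∈ G.neighborFinset v, f u ≤ 1 := fun u hu => by
        have := h2 u (G.adj_symm ((mem_neighborFinset ..).1 hu))
        have := hle u
        omega
      have htwo : 1 < #{u ∈ G.neighborFinset v | f u ≠ 0} :=
        calc 1 < ∑ u ∈ G.neighborFinset v, f u := h
          _ = ∑ u ∈ G.neighborFinset v with f u ≠ 0, f u := (sum_filter_ne_zero _).symm
          _ ≤ #{u ∈ G.neighborFinset v | f u ≠ 0} • 1 :=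
            sum_le_card_nsmul _ _ _ fun u hu => hle1 u (mem_filter.1 hu).1
          _ = _ := mul_one _
      obtain ⟨x, hx, y, hy, hxy⟩ := one_lt_card.1 htwo
      rw [mem_filter, mem_neighborFinset] at hx hy
      have := hle1 x (by simpa using hx.1)
      have := hle1 y (by simpa using hy.1)
      exact ⟨x, y, hxy, hx.1.symm, hy.1.symm, by omega, by omega⟩
  · simp [sum_pos_iff, adj_comm]

def zeroPadded {n : ℕ} (f : Fin n → ℕ) : ℕ → ℕ
  | 0 => 0
  | j + 1 => if h : j < n then f ⟨j, h⟩ else 0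

section Path

variable {n : ℕ}

instance : DecidableRel (pathGraph n).Adj := fun _ _ => decidable_of_iff' _ pathGraph_adj

theorem zeroPadded_succ (f : Fin n → ℕ) (i : Fin n) : zeroPadded f (i + 1) = f i := by
  simp [zeroPadded]

theorem zeroPadded_of_lt (f : Fin n → ℕ) {j : ℕ} (h : n < j) : zeroPadded f j = 0 := by
  obtain ⟨j, rfl⟩ := Nat.exists_eq_add_one_of_ne_zero (by omega : j ≠ 0)
  simp [zeroPadded, show ¬ j < n by omega]

theorem zeroPadded_comp_val (c : ℕ → ℕ) (j : ℕ) :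
    zeroPadded (fun i : Fin n => c i) j = if 0 < j ∧ j ≤ n then c (j - 1) else 0 := by
  cases j <;> simp [zeroPadded]

theorem sum_univ_eq_sum_zeroPadded (f : Fin n → ℕ) :
    ∑ i, f i = ∑ j ∈ range n, zeroPadded f (j + 1) := by
  simp_rw [← zeroPadded_succ f]
  exact Fin.sum_univ_eq_sum_range (fun j => zeroPadded f (j + 1)) n

theorem sum_neighborFinset_pathGraph (f : Fin n → ℕ) (i : Fin n) :
    ∑ u ∈ (pathGraph n).neighborFinset i, f u = zeroPadded f i + zeroPadded f (i + 2) := by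
  rw [neighborFinset_eq_filter, sum_filter]
  simp_rw [pathGraph_adj, ← zeroPadded_succ f]
  rw [Fin.sum_univ_eq_sum_range
    (fun j => if i.val + 1 = j ∨ j + 1 = i.val then zeroPadded f (j + 1) else 0) n]
  have hsplit : ∀ j, (if i.val + 1 = j ∨ j + 1 = i.val then zeroPadded f (j + 1) else 0) =
      (if i.val + 1 = j then zeroPadded f (j + 1) else 0) +
        (if j + 1 = i.val then zeroPadded f (j + 1) else 0) := by
    intro j
    split_ifs <;> omega
  simp_rw [hsplit, sum_add_distrib, sum_ite_eq, mem_range]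
  obtain ⟨i, hi⟩ := i
  have hright : (if i + 1 < n then zeroPadded f (i + 1 + 1) else 0) = zeroPadded f (i + 2) := by
    split_ifs with h
    · rfl
    · exact (zeroPadded_of_lt f (by omega)).symm
  rw [hright, add_comm]
  congr 1
  cases i with
  | zero => simp [zeroPadded]
  | succ k => simp [sum_ite_eq', show k < n by omega]

end Path

/-- The conditions of a TR2DF of `P_n` on the sequence `zeroPadded f`: vertex `j` sits at index
`j + 1`, so its neighbours sit at `j` and `j + 2`, and the empty slots `0` and `n + 1` stand in
for the missing neighbours of the end vertices. -/
structure IsTR2Seq (n : ℕ) (F : ℕ → ℕ) : Prop where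
  zero_left : F 0 = 0
  zero_right : F (n + 1) = 0
  le_two : ∀ j, F j ≤ 2
  two_le_of_eq_zero : ∀ j < n, F (j + 1) = 0 → 2 ≤ F j + F (j + 2)
  pos_of_pos : ∀ j < n, 0 < F (j + 1) → 0 < F j + F (j + 2)

theorem isTR2DF_pathGraph_iff {n : ℕ} (f : Fin n → ℕ) :
    IsTR2DF (pathGraph n) f ↔ IsTR2Seq n (zeroPadded f) := by
  simp_rw [isTR2DF_iff_sum_neighborFinset, sum_neighborFinset_pathGraph]
  constructor
  · rintro ⟨hle, hzero, hpos⟩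
    refine ⟨rfl, zeroPadded_of_lt f (by omega), fun j => ?_, fun j hj => ?_, fun j hj => ?_⟩
    · cases j
      · simp [zeroPadded]
      · simp only [zeroPadded]
        split_ifs
        exacts [hle _, by omega]
    · simpa [zeroPadded_succ f ⟨j, hj⟩] using hzero ⟨j, hj⟩
    · simpa [zeroPadded_succ f ⟨j, hj⟩] using hpos ⟨j, hj⟩
  · intro hF
    refine ⟨fun v => ?_, fun v => ?_, fun v => ?_⟩ <;> rw [← zeroPadded_succ f v]
    exacts [hF.le_two _, hF.two_le_of_eq_zero v v.2, hF.pos_of_pos v v.2]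

def window (F : ℕ → ℕ) (j : ℕ) : ℕ := F j + F (j + 1) + F (j + 2)

theorem sum_range_window (F : ℕ → ℕ) (n : ℕ) :
    ∑ j ∈ range n, window F j + F 1 + F n = 3 * ∑ j ∈ range n, F (j + 1) + F 0 + F (n + 1) := by
  induction n with
  | zero => simp [add_comm]
  | succ n ih =>
    simp only [sum_range_succ, window, Nat.add_assoc, Nat.reduceAdd] at ih ⊢
    omega

namespace IsTR2Seq

variable {n : ℕ} {F : ℕ → ℕ}

theorem reverse (hF : IsTR2Seq n F) : IsTR2Seq n fun j => F (n + 1 - j) where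
  zero_left := by simpa using hF.zero_right
  zero_right := by simpa using hF.zero_left
  le_two _ := hF.le_two _
  two_le_of_eq_zero j hj h := by
    have := hF.two_le_of_eq_zero (n - 1 - j) (by omega)
    rw [show n - 1 - j + 1 = n + 1 - (j + 1) by omega, show n - 1 - j + 2 = n + 1 - j by omega,
      show n - 1 - j = n + 1 - (j + 2) by omega] at this
    omega
  pos_of_pos j hj h := by
    have := hF.pos_of_pos (n - 1 - j) (by omega)
    rw [show n - 1 - j + 1 = n + 1 - (j + 1) by omega, show n - 1 - j + 2 = n + 1 - j by omega,
      show n - 1 - j = n + 1 - (j + 2) by omega] at this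
    omega

theorem two_le_window (hF : IsTR2Seq n F) {j : ℕ} (hj : j < n) : 2 ≤ window F j := by
  have := hF.two_le_of_eq_zero j hj
  have := hF.pos_of_pos j hj
  unfold window
  omega

theorem three_le_window_one (hF : IsTR2Seq n F) (hn : 0 < n) (h : F 1 = 0) :
    1 < n ∧ 3 ≤ window F 1 := by
  have h2 : 2 ≤ F 0 + F 2 := hF.two_le_of_eq_zero 0 hn h
  have h0 := hF.zero_left
  have hle := hF.le_two 2
  have hn1 : 1 < n := by
    by_contra! hn1
    obtain rfl : n = 1 := by omega
    have : F 2 = 0 := hF.zero_right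
    omega
  have h3 : 0 < F 1 + F 3 := hF.pos_of_pos 1 hn1 (by omega : 0 < F 2)
  exact ⟨hn1, show 3 ≤ F 1 + F 2 + F 3 by omega⟩

theorem three_le_window_sub_two (hF : IsTR2Seq n F) (hn : 0 < n) (h : F n = 0) :
    1 < n ∧ 3 ≤ window F (n - 2) := by
  obtain ⟨hn1, hw⟩ := hF.reverse.three_le_window_one hn (by simpa using h)
  have hw : 3 ≤ F (n + 1 - 1) + F (n + 1 - 2) + F (n + 1 - 3) := hw
  rw [show n + 1 - 1 = n by omega, show n + 1 - 2 = n - 2 + 1 by omega,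
    show n + 1 - 3 = n - 2 by omega] at hw
  refine ⟨hn1, show 3 ≤ F (n - 2) + F (n - 2 + 1) + F (n - 2 + 2) from ?_⟩
  rw [show n - 2 + 2 = n by omega]
  omega

theorem lower_bound (hF : IsTR2Seq n F) (hn : 0 < n) :
    2 * n + 2 ≤ 3 * ∑ j ∈ range n, F (j + 1) := by
  have hW : ∀ j ∈ range n, 2 ≤ window F j := fun j hj => hF.two_le_window (mem_range.1 hj)
  have hsum : 3 * ∑ j ∈ range n, F (j + 1) =
      2 * n + ∑ j ∈ range n, (window F j - 2) + F 1 + F n := by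
    have hwin := sum_range_window F n
    rw [hF.zero_left, hF.zero_right,
      sum_congr rfl fun j hj => (Nat.add_sub_cancel' (hW j hj)).symm, sum_add_distrib,
      sum_const, card_range, smul_eq_mul] at hwin
    omega
  have hexcess {i} (hi : i < n) : window F i - 2 ≤ ∑ j ∈ range n, (window F j - 2) :=
    single_le_sum (f := fun j => window F j - 2) (fun _ _ => Nat.zero_le _) (mem_range.2 hi)
  rcases Nat.eq_zero_or_pos (F 1) with hF1 | hF1 <;>
    rcases Nat.eq_zero_or_pos (F n) with hFn | hFn
  · obtain ⟨hn1, hl⟩ := hF.three_le_window_one hn hF1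
    obtain ⟨-, hr⟩ := hF.three_le_window_sub_two hn hFn
    -- for `n = 3` the two windows coincide, but then both ends cannot be empty
    have hne : 1 ≠ n - 2 := by
      intro hn3
      obtain rfl : n = 3 := by omega
      have : 3 ≤ F 1 + F 2 + F 3 := hl
      have := hF.le_two 2
      omega
    have := sum_le_sum_of_subset (f := fun j => window F j - 2)
      (show {1, n - 2} ⊆ range n by simp [insert_subset_iff]; omega)
    rw [sum_pair hne] at this
    omega
  · have := hF.three_le_window_one hn hF1
    have := hexcess this.1
    omega
  · have := hF.three_le_window_sub_two hn hFn
    have := hexcess (i := n - 2) (by omega)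
    omega
  · omega

end IsTR2Seq

/-- The pattern `1 1 0 1 1 0 …`, except that a zero at `j` is kept only if `j + 2 < n`, i.e. only
if the vertex `j + 1` has the positive neighbour `j + 2`. -/
def pathWitness (n j : ℕ) : ℕ := if j % 3 = 2 ∧ j + 2 < n then 0 else 1

theorem sum_range_pathWitness (n m : ℕ) :
    ∑ j ∈ range m, pathWitness n j = m - min m (n - 2) / 3 := by
  induction m with
  | zero => simp
  | succ m ih =>
    rw [sum_range_succ, ih, pathWitness]
    split_ifs <;> omega

theorem isTR2Seq_pathWitness {n : ℕ} (hn : 2 ≤ n) :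
    IsTR2Seq n (zeroPadded fun i : Fin n => pathWitness n i) := by
  refine ⟨rfl, zeroPadded_of_lt _ (by omega), fun j => ?_, fun j hj h => ?_, fun j hj h => ?_⟩ <;>
    simp only [zeroPadded_comp_val] at * <;> simp only [pathWitness] at * <;>
    split_ifs at * <;> omega

theorem stmt6 (n : ℕ) (hn : 2 ≤ n) :
    tR2 (SimpleGraph.pathGraph n) = (2 * n + 2 + 2) / 3 := by
  refine IsLeast.csInf_eq ⟨⟨fun i => pathWitness n i, ?_, ?_⟩, ?_⟩
  · exact (isTR2DF_pathGraph_iff _).2 (isTR2Seq_pathWitness hn)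
  · rw [Fin.sum_univ_eq_sum_range (pathWitness n), sum_range_pathWitness]
    omega
  · rintro _ ⟨f, hf, rfl⟩
    have := ((isTR2DF_pathGraph_iff f).1 hf).lower_bound (by omega)
    rw [sum_univ_eq_sum_zeroPadded]
    omega
end

section
/- For the cycle C_n with n ≥ 3, the total Roman {2}-domination number equals ⌈2n/3⌉. -/
open SimpleGraph

lemma tR2_eq_of_isTR2DF_of_forall_le {V : Type*} [Fintype V] {G : SimpleGraph V} {f : V → ℕ}
    (hf : IsTR2DF G f) (hmin : ∀ g, IsTR2DF G g → ∑ v, f v ≤ ∑ v, g v) :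
    tR2 G = ∑ v, f v :=
  le_antisymm (Nat.sInf_le ⟨f, hf, rfl⟩)
    (le_csInf ⟨_, f, hf, rfl⟩ fun _ ⟨g, hg, hsum⟩ => hsum ▸ hmin g hg)

namespace SimpleGraph

variable {m : ℕ}

lemma cycleGraph_adj_iff {u v : Fin (m + 2)} :
    (cycleGraph (m + 2)).Adj u v ↔ u = v - 1 ∨ u = v + 1 := by
  rw [adj_comm, ← mem_neighborSet, cycleGraph_neighborSet]
  rfl

lemma cycleGraph_adj_sub_one_self (v : Fin (m + 2)) : (cycleGraph (m + 2)).Adj (v - 1) v :=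
  cycleGraph_adj_iff.mpr (.inl rfl)

lemma cycleGraph_adj_add_one_self (v : Fin (m + 2)) : (cycleGraph (m + 2)).Adj (v + 1) v :=
  cycleGraph_adj_iff.mpr (.inr rfl)

end SimpleGraph

lemma Fin.sub_one_ne_add_one {m : ℕ} (v : Fin (m + 3)) : v - 1 ≠ v + 1 := by
  rw [Ne, sub_eq_iff_eq_add, add_assoc, left_eq_add, ← Fin.val_inj, Fin.val_add, Fin.val_one,
    Nat.mod_eq_of_lt (show 1 + 1 < m + 3 by omega), Fin.val_zero]
  omega

section LowerBound

variable {m : ℕ} {f : Fin (m + 3) → ℕ}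

lemma two_le_sum_window_of_isTR2DF (hf : IsTR2DF (cycleGraph (m + 3)) f) (v : Fin (m + 3)) :
    2 ≤ f (v - 1) + f v + f (v + 1) := by
  obtain ⟨-, hdom, htot⟩ := hf
  rcases Nat.eq_zero_or_pos (f v) with hzero | hpos
  · rcases hdom v hzero with ⟨u, hu, hu2⟩ | ⟨x, y, hxy, hx, hy, hx1, hy1⟩
    · rcases cycleGraph_adj_iff.mp hu with rfl | rfl <;> omega
    · rw [cycleGraph_adj_iff] at hx hy
      rcases hx with rfl | rfl <;> rcases hy with rfl | rfl <;> simp_all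
  · obtain ⟨u, hu, hupos⟩ := htot v hpos
    rcases cycleGraph_adj_iff.mp hu with rfl | rfl <;> omega

lemma two_mul_le_three_mul_sum_of_isTR2DF (hf : IsTR2DF (cycleGraph (m + 3)) f) :
    2 * (m + 3) ≤ 3 * ∑ v, f v := by
  have hwindows : ∑ _v : Fin (m + 3), 2 ≤ ∑ v, (f (v - 1) + f v + f (v + 1)) :=
    Finset.sum_le_sum fun v _ => two_le_sum_window_of_isTR2DF hf v
  have hleft : ∑ v, f (v - 1) = ∑ v, f v := Equiv.sum_comp (Equiv.subRight 1) f
  have hright : ∑ v, f (v + 1) = ∑ v, f v := Equiv.sum_comp (Equiv.addRight 1) f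
  rw [Finset.sum_add_distrib, Finset.sum_add_distrib, hleft, hright] at hwindows
  simp only [Finset.sum_const, Finset.card_univ, Fintype.card_fin, smul_eq_mul] at hwindows
  omega

end LowerBound

def cycleTR2DF (n : ℕ) (v : Fin n) : ℕ := if v.val % 3 = 2 then 0 else 1

lemma isTR2DF_cycleTR2DF (m : ℕ) : IsTR2DF (cycleGraph (m + 3)) (cycleTR2DF (m + 3)) := by
  have hsucc (v : Fin (m + 3)) : (v + 1).val = v.val + 1 ∨ (v + 1).val = 0 := by
    rw [Fin.val_add_one]; split_ifs <;> simp
  have hpred (v : Fin (m + 3)) (hv : v.val ≠ 0) : (v - 1).val = v.val - 1 :=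
    Fin.val_sub_one_of_ne_zero fun h => hv (by simp [h])
  refine ⟨fun v => ?_, fun v hv => .inr ?_, fun v hv => ?_⟩ <;> simp only [cycleTR2DF] at *
  · split_ifs <;> omega
  · split_ifs at hv with hv3
    refine ⟨v - 1, v + 1, Fin.sub_one_ne_add_one v, cycleGraph_adj_sub_one_self v,
      cycleGraph_adj_add_one_self v, ?_, ?_⟩
    · have := hpred v (by omega)
      split_ifs <;> omega
    · have := hsucc v
      split_ifs <;> omega
  · have hv3 : v.val % 3 ≠ 2 := fun h => by simp [h] at hv
    by_cases h : v.val % 3 = 0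
    · refine ⟨v + 1, cycleGraph_adj_add_one_self v, ?_⟩
      have := hsucc v
      split_ifs <;> omega
    · refine ⟨v - 1, cycleGraph_adj_sub_one_self v, ?_⟩
      have := hpred v (by omega)
      split_ifs <;> omega

lemma sum_cycleTR2DF (n : ℕ) : ∑ v, cycleTR2DF n v = (2 * n + 2) / 3 := by
  simp only [cycleTR2DF]
  rw [Fin.sum_univ_eq_sum_range (fun k => if k % 3 = 2 then 0 else 1) n]
  induction n with
  | zero => rfl
  | succ k ih =>
    rw [Finset.sum_range_succ, ih]
    obtain ⟨j, rfl | rfl | rfl⟩ : ∃ j, k = 3 * j ∨ k = 3 * j + 1 ∨ k = 3 * j + 2 :=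
      ⟨k / 3, by omega⟩
    all_goals split_ifs <;> omega

theorem stmt7 (n : ℕ) (hn : 3 ≤ n) :
    tR2 (SimpleGraph.cycleGraph n) = (2 * n + 2) / 3 := by
  obtain ⟨m, rfl⟩ : ∃ m, n = m + 3 := ⟨n - 3, by omega⟩
  rw [← sum_cycleTR2DF]
  refine tR2_eq_of_isTR2DF_of_forall_le (isTR2DF_cycleTR2DF m) fun f hf => ?_
  have hlower := two_mul_le_three_mul_sum_of_isTR2DF hf
  rw [sum_cycleTR2DF]
  omega
end

section
/- Let G be a nontrivial connected graph of order n ≥ 5. Then γ_{tR2}(G) = 3 if and only if either G has exactly one vertex of degree n−1, or Δ(G) ≤ n−2 and there exists a set A of three vertices of G such that the induced subgraph G[A] is isomorphic to P_3 or C_3 and every vertex outside A has at least two neighbors in A. -/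
section Helpers
variable {V : Type*} [Fintype V] [DecidableEq V]

lemma pair_le_sum (f : V → ℕ) {a b : V} (h : a ≠ b) : f a + f b ≤ ∑ v, f v := by
  rw [← Finset.sum_pair h]
  exact Finset.sum_le_sum_of_subset (Finset.subset_univ _)

lemma triple_le_sum (f : V → ℕ) {a b c : V} (hab : a ≠ b) (hac : a ≠ c) (hbc : b ≠ c) :
    f a + f b + f c ≤ ∑ v, f v := by
  have h : ∑ x ∈ ({a, b, c} : Finset V), f x = f a + (f b + f c) := by
    rw [Finset.sum_insert (by simp [hab, hac]), Finset.sum_pair hbc]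
  calc f a + f b + f c = ∑ x ∈ ({a, b, c} : Finset V), f x := by rw [h, add_assoc]
    _ ≤ ∑ v, f v := Finset.sum_le_sum_of_subset (Finset.subset_univ _)

lemma two_le_weight [Nonempty V] (G : SimpleGraph V) {f : V → ℕ} (hf : IsTR2DF G f) :
    2 ≤ ∑ v, f v := by
  obtain ⟨h1, h2, h3⟩ := hf
  by_cases hz : ∀ v, f v = 0
  · obtain ⟨v⟩ := ‹Nonempty V›
    rcases h2 v (hz v) with ⟨u, _, hu⟩ | ⟨x, y, _, _, _, hx, _⟩
    · rw [hz u] at hu; omega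
    · rw [hz x] at hx; omega
  · push_neg at hz
    obtain ⟨v, hv⟩ := hz
    obtain ⟨u, hadj, hu⟩ := h3 v (Nat.pos_of_ne_zero hv)
    have := pair_le_sum f hadj.ne
    omega

lemma weight_two (G : SimpleGraph V) {f : V → ℕ} (hf : IsTR2DF G f)
    (hs : ∑ v, f v = 2) :
    ∃ a b, a ≠ b ∧ (∀ z, z ≠ a → G.Adj a z) ∧ (∀ z, z ≠ b → G.Adj b z) := by
  obtain ⟨h1, h2, h3⟩ := hf
  have hno2 : ∀ v, f v ≠ 2 := by
    intro v hv
    obtain ⟨u, hadj, hu⟩ := h3 v (by omega)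
    have := pair_le_sum f hadj.ne
    omega
  have ha : ∃ a, 0 < f a := by
    by_contra h
    push_neg at h
    have : ∑ v, f v = 0 := Finset.sum_eq_zero (fun v _ => by have := h v; omega)
    omega
  obtain ⟨a, ha⟩ := ha
  have hfa : f a = 1 := by have := hno2 a; have := h1 a; omega
  obtain ⟨b, hadjba, hb⟩ := h3 a ha
  have hba : b ≠ a := hadjba.ne
  have hfb : f b = 1 := by have := hno2 b; have := h1 b; omega
  have hout : ∀ z, z ≠ a → z ≠ b → f z = 0 := by
    intro z hza hzb
    have := triple_le_sum f hba.symm hza.symm hzb.symm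
    omega
  have hboth : ∀ z, z ≠ a → z ≠ b → G.Adj a z ∧ G.Adj b z := by
    intro z hza hzb
    rcases h2 z (hout z hza hzb) with ⟨u, _, hu⟩ | ⟨x, y, hxy, hxz, hyz, hx, hy⟩
    · exact absurd hu (hno2 u)
    · have hxm : x = a ∨ x = b := by
        by_contra h; push_neg at h; rw [hout x h.1 h.2] at hx; omega
      have hym : y = a ∨ y = b := by
        by_contra h; push_neg at h; rw [hout y h.1 h.2] at hy; omega
      rcases hxm with rfl | rfl <;> rcases hym with rfl | rfl
      · exact absurd rfl hxy
      · exact ⟨hxz, hyz⟩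
      · exact ⟨hyz, hxz⟩
      · exact absurd rfl hxy
  refine ⟨a, b, hba.symm, ?_, ?_⟩
  · intro z hza
    by_cases hzb : z = b
    · subst hzb; exact hadjba.symm
    · exact (hboth z hza hzb).1
  · intro z hzb
    by_cases hza : z = a
    · subst hza; exact hadjba
    · exact (hboth z hza hzb).2

lemma univ_of_degree (G : SimpleGraph V) [DecidableRel G.Adj] {a : V}
    (hdeg : G.degree a = Fintype.card V - 1) : ∀ z, z ≠ a → G.Adj a z := by
  intro z hz
  have hsub : G.neighborFinset a ⊆ Finset.univ.erase a := by
    intro x hx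
    simp only [SimpleGraph.mem_neighborFinset] at hx
    exact Finset.mem_erase.mpr ⟨hx.ne', Finset.mem_univ x⟩
  have hcard : (Finset.univ.erase a).card ≤ (G.neighborFinset a).card := by
    rw [G.card_neighborFinset_eq_degree, hdeg, Finset.card_erase_of_mem (Finset.mem_univ a),
      Finset.card_univ]
  have heq := Finset.eq_of_subset_of_card_le hsub hcard
  have : z ∈ G.neighborFinset a := by
    rw [heq]; exact Finset.mem_erase.mpr ⟨hz, Finset.mem_univ z⟩
  exact (SimpleGraph.mem_neighborFinset _ _ _).mp this

lemma degree_of_univ (G : SimpleGraph V) [DecidableRel G.Adj] {a : V}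
    (h : ∀ z, z ≠ a → G.Adj a z) : G.degree a = Fintype.card V - 1 := by
  have heq : G.neighborFinset a = Finset.univ.erase a := by
    ext z
    simp only [SimpleGraph.mem_neighborFinset, Finset.mem_erase, Finset.mem_univ, and_true]
    exact ⟨fun hz => hz.ne', fun hz => h z hz⟩
  rw [← G.card_neighborFinset_eq_degree, heq,
    Finset.card_erase_of_mem (Finset.mem_univ a), Finset.card_univ]

lemma sum_two_ind {a b : V} (h : a ≠ b) (m k : ℕ) :
    ∑ v, (if v = a then m else if v = b then k else 0) = m + k := by
  have key : ∀ v : V, (if v = a then m else if v = b then k else 0)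
      = (if v = a then m else 0) + (if v = b then k else 0) := by
    intro v
    by_cases h1 : v = a
    · subst h1; simp [h]
    · simp [h1]
  rw [Finset.sum_congr rfl (fun v _ => key v), Finset.sum_add_distrib]
  simp [Finset.sum_ite_eq']

lemma sum_three_ind {a b c : V} (hab : a ≠ b) (hac : a ≠ c) (hbc : b ≠ c) :
    ∑ v, (if v = a then 1 else if v = b then 1 else if v = c then 1 else 0) = 3 := by
  have key : ∀ v : V, (if v = a then 1 else if v = b then 1 else if v = c then 1 else 0)
      = (if v = a then 1 else 0) + (if v = b then 1 else 0) + (if v = c then 1 else 0) := by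
    intro v
    by_cases h1 : v = a
    · subst h1; simp [hab, hac]
    · by_cases h2 : v = b
      · subst h2; simp [h1, hbc]
      · simp [h1, h2]
  rw [Finset.sum_congr rfl (fun v _ => key v), Finset.sum_add_distrib, Finset.sum_add_distrib]
  simp [Finset.sum_ite_eq']

lemma weight_three (G : SimpleGraph V) {f : V → ℕ} (hf : IsTR2DF G f)
    (hs : ∑ v, f v = 3) :
    (∃ v, ∀ z, z ≠ v → G.Adj v z) ∨
    (∃ a b c : V, a ≠ b ∧ b ≠ c ∧ a ≠ c ∧
      ((G.Adj a b ∧ G.Adj b c ∧ ¬ G.Adj a c) ∨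
       (G.Adj a b ∧ G.Adj b c ∧ G.Adj a c)) ∧
      ∀ z : V, z ≠ a → z ≠ b → z ≠ c →
        ((G.Adj z a ∧ G.Adj z b) ∨ (G.Adj z a ∧ G.Adj z c) ∨
         (G.Adj z b ∧ G.Adj z c))) := by
  obtain ⟨h1, h2, h3⟩ := hf
  by_cases h2v : ∃ v, f v = 2
  · left
    obtain ⟨v, hv⟩ := h2v
    obtain ⟨u, hadjuv, hu⟩ := h3 v (by omega)
    have huv : u ≠ v := hadjuv.ne
    have hfu : f u = 1 := by have := pair_le_sum f huv; omega
    have hout : ∀ z, z ≠ v → z ≠ u → f z = 0 := by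
      intro z hzv hzu
      have := triple_le_sum f huv.symm hzv.symm hzu.symm
      omega
    refine ⟨v, fun z hzv => ?_⟩
    by_cases hzu : z = u
    · subst hzu; exact hadjuv.symm
    · rcases h2 z (hout z hzv hzu) with ⟨w, hadjwz, hw⟩ | ⟨x, y, hxy, hxz, hyz, hx, hy⟩
      · have hwv : w = v := by
          by_contra hwv
          by_cases hwu : w = u
          · subst hwu; omega
          · rw [hout w hwv hwu] at hw; omega
        subst hwv; exact hadjwz
      · have hxu : x = u := by
          by_contra hxu
          by_cases hxv : x = v
          · subst hxv; omega
          · rw [hout x hxv hxu] at hx; omega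
        have hyu : y = u := by
          by_contra hyu
          by_cases hyv : y = v
          · subst hyv; omega
          · rw [hout y hyv hyu] at hy; omega
        subst hxu; subst hyu; exact absurd rfl hxy
  · push_neg at h2v
    have hle1 : ∀ v, f v ≤ 1 := by intro v; have := h1 v; have := h2v v; omega
    set s : Finset V := Finset.univ.filter (fun v => f v = 1) with hsdef
    have hmem : ∀ x, x ∈ s ↔ f x = 1 := by
      intro x; simp [hsdef]
    have hsum : ∑ v ∈ s, f v = ∑ v, f v :=
      Finset.sum_filter_of_ne (fun x _ hx => by have := hle1 x; omega)
    have hcard : s.card = 3 := by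
      have : ∑ v ∈ s, f v = s.card := by
        rw [Finset.sum_congr rfl (fun x hx => (hmem x).mp hx), Finset.sum_const,
          smul_eq_mul, mul_one]
      omega
    obtain ⟨a, b, c, hab, hac, hbc, hset⟩ := Finset.card_eq_three.mp hcard
    have hfa : f a = 1 := (hmem a).mp (by rw [hset]; simp)
    have hfb : f b = 1 := (hmem b).mp (by rw [hset]; simp)
    have hfc : f c = 1 := (hmem c).mp (by rw [hset]; simp)
    have hout : ∀ z, z ≠ a → z ≠ b → z ≠ c → f z = 0 := by
      intro z hza hzb hzc
      have : z ∉ s := by rw [hset]; simp [hza, hzb, hzc]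
      rw [hmem] at this
      have := hle1 z; omega
    have hposmem : ∀ x, 0 < f x → x = a ∨ x = b ∨ x = c := by
      intro x hx
      by_contra h; push_neg at h
      rw [hout x h.1 h.2.1 h.2.2] at hx; omega
    have Na : G.Adj a b ∨ G.Adj a c := by
      obtain ⟨u, hadj, hu⟩ := h3 a (by omega)
      rcases hposmem u hu with rfl | rfl | rfl
      · exact absurd rfl hadj.ne
      · exact Or.inl hadj.symm
      · exact Or.inr hadj.symm
    have Nb : G.Adj a b ∨ G.Adj b c := by
      obtain ⟨u, hadj, hu⟩ := h3 b (by omega)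
      rcases hposmem u hu with rfl | rfl | rfl
      · exact Or.inl hadj
      · exact absurd rfl hadj.ne
      · exact Or.inr hadj.symm
    have Nc : G.Adj a c ∨ G.Adj b c := by
      obtain ⟨u, hadj, hu⟩ := h3 c (by omega)
      rcases hposmem u hu with rfl | rfl | rfl
      · exact Or.inl hadj
      · exact Or.inr hadj
      · exact absurd rfl hadj.ne
    have htwo : ∀ z, z ≠ a → z ≠ b → z ≠ c →
        ((G.Adj z a ∧ G.Adj z b) ∨ (G.Adj z a ∧ G.Adj z c) ∨ (G.Adj z b ∧ G.Adj z c)) := by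
      intro z hza hzb hzc
      rcases h2 z (hout z hza hzb hzc) with ⟨u, _, hu⟩ | ⟨x, y, hxy, hxz, hyz, hx, hy⟩
      · exact absurd hu (h2v u)
      · have hxz' := hxz.symm
        have hyz' := hyz.symm
        rcases hposmem x (by omega) with rfl | rfl | rfl <;>
            rcases hposmem y (by omega) with rfl | rfl | rfl
        · exact absurd rfl hxy
        · exact Or.inl ⟨hxz', hyz'⟩
        · exact Or.inr (Or.inl ⟨hxz', hyz'⟩)
        · exact Or.inl ⟨hyz', hxz'⟩
        · exact absurd rfl hxy
        · exact Or.inr (Or.inr ⟨hxz', hyz'⟩)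
        · exact Or.inr (Or.inl ⟨hyz', hxz'⟩)
        · exact Or.inr (Or.inr ⟨hyz', hxz'⟩)
        · exact absurd rfl hxy
    right
    by_cases A1 : G.Adj a b <;> by_cases A2 : G.Adj b c <;> by_cases A3 : G.Adj a c
    · exact ⟨a, b, c, hab, hbc, hac, Or.inr ⟨A1, A2, A3⟩, htwo⟩
    · exact ⟨a, b, c, hab, hbc, hac, Or.inl ⟨A1, A2, A3⟩, htwo⟩
    · -- A1, ¬A2, A3 : path b - a - c
      refine ⟨b, a, c, hab.symm, hac, hbc, Or.inl ⟨A1.symm, A3, A2⟩, ?_⟩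
      intro z hzb hza hzc
      have := htwo z hza hzb hzc
      tauto
    · -- A1, ¬A2, ¬A3
      exact absurd Nc (by tauto)
    · -- ¬A1, A2, A3 : path a - c - b
      refine ⟨a, c, b, hac, hbc.symm, hab, Or.inl ⟨A3, A2.symm, A1⟩, ?_⟩
      intro z hza hzc hzb
      have := htwo z hza hzb hzc
      tauto
    · exact absurd Na (by tauto)
    · exact absurd Na (by tauto)
    · exact absurd Na (by tauto)

end Helpers

theorem stmt9 {V : Type*} [Fintype V] (G : SimpleGraph V) [DecidableRel G.Adj]
    (hconn : G.Connected) (hn : 5 ≤ Fintype.card V) :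
    tR2 G = 3 ↔
      ((∃! u : V, G.degree u = Fintype.card V - 1) ∨
       (G.maxDegree ≤ Fintype.card V - 2 ∧
        ∃ a b c : V, a ≠ b ∧ b ≠ c ∧ a ≠ c ∧
          -- G[{a,b,c}] is isomorphic to P₃ or C₃
          ((G.Adj a b ∧ G.Adj b c ∧ ¬ G.Adj a c) ∨
           (G.Adj a b ∧ G.Adj b c ∧ G.Adj a c)) ∧
          -- every vertex outside {a,b,c} has at least two neighbors in {a,b,c}
          ∀ z : V, z ≠ a → z ≠ b → z ≠ c →
            ((G.Adj z a ∧ G.Adj z b) ∨ (G.Adj z a ∧ G.Adj z c) ∨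
             (G.Adj z b ∧ G.Adj z c)))) := by
  classical
  have hne : Nonempty V := Fintype.card_pos_iff.mp (by omega)
  set n := Fintype.card V with hn_def
  set S := {w | ∃ f : V → ℕ, IsTR2DF G f ∧ ∑ v, f v = w} with hS_def
  have htR2 : tR2 G = sInf S := rfl
  constructor
  · intro h
    rw [htR2] at h
    have hSne : S.Nonempty := by
      by_contra h'
      rw [Set.not_nonempty_iff_eq_empty] at h'
      rw [h', Nat.sInf_empty] at h
      omega
    have h3mem : 3 ∈ S := h ▸ Nat.sInf_mem hSne
    have h2not : 2 ∉ S := fun h2 => by have := Nat.sInf_le h2; omega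
    obtain ⟨f, hf, hsum⟩ := h3mem
    by_cases hu : ∃ v, G.degree v = n - 1
    · left
      obtain ⟨v, hv⟩ := hu
      refine ⟨v, hv, fun y hy => ?_⟩
      by_contra hyv
      have hyuniv := univ_of_degree G hy
      have hvuniv := univ_of_degree G hv
      apply h2not
      refine ⟨fun x => if x = v then 1 else if x = y then 1 else 0, ⟨?_, ?_, ?_⟩, ?_⟩
      · intro x; dsimp only; split_ifs <;> omega
      · intro x hx
        dsimp only at hx
        by_cases hxv : x = v
        · simp [hxv] at hx
        by_cases hxy : x = y
        · subst hxy; simp [hxv] at hx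
        right
        exact ⟨v, y, fun hvy => hyv hvy.symm, hvuniv x hxv, hyuniv x hxy,
          by simp, by simp [hyv]⟩
      · intro x hx
        dsimp only at hx
        by_cases hxv : x = v
        · subst hxv
          exact ⟨y, hyuniv x (fun h => hyv h.symm), by simp [hyv]⟩
        by_cases hxy : x = y
        · subst hxy
          exact ⟨v, hvuniv x hxv, by simp⟩
        · simp [hxv, hxy] at hx
      · exact sum_two_ind (fun h => hyv h.symm) 1 1
    · push_neg at hu
      right
      constructor
      · apply G.maxDegree_le_of_forall_degree_le
        intro v
        have h1 := G.degree_lt_card_verts v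
        have h2 := hu v
        omega
      · rcases weight_three G hf hsum with ⟨v, hv⟩ | htriple
        · exact absurd (degree_of_univ G hv) (hu v)
        · exact htriple
  · intro h
    rw [htR2]
    have h3mem : 3 ∈ S := by
      rcases h with ⟨u, hu, _⟩ | ⟨hmax, a, b, c, hab, hbc, hac, hadj, hdom⟩
      · have huniv := univ_of_degree G hu
        have hdegpos : 0 < G.degree u := by rw [hu]; omega
        obtain ⟨w, hadj⟩ := (G.degree_pos_iff_exists_adj u).mp hdegpos
        have hwu : w ≠ u := hadj.ne'
        refine ⟨fun x => if x = u then 2 else if x = w then 1 else 0, ⟨?_, ?_, ?_⟩, ?_⟩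
        · intro x; dsimp only; split_ifs <;> omega
        · intro x hx
          dsimp only at hx
          by_cases hxu : x = u
          · simp [hxu] at hx
          by_cases hxw : x = w
          · subst hxw; simp [hxu] at hx
          · exact Or.inl ⟨u, huniv x hxu, by simp⟩
        · intro x hx
          dsimp only at hx
          by_cases hxu : x = u
          · subst hxu; exact ⟨w, hadj.symm, by simp [hwu]⟩
          by_cases hxw : x = w
          · subst hxw; exact ⟨u, hadj, by simp⟩
          · simp [hxu, hxw] at hx
        · simpa using sum_two_ind hadj.ne 2 1
      · have hGab : G.Adj a b := by rcases hadj with ⟨h1, _, _⟩ | ⟨h1, _, _⟩ <;> exact h1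
        have hGbc : G.Adj b c := by rcases hadj with ⟨_, h1, _⟩ | ⟨_, h1, _⟩ <;> exact h1
        refine ⟨fun x => if x = a then 1 else if x = b then 1 else if x = c then 1 else 0,
          ⟨?_, ?_, ?_⟩, sum_three_ind hab hac hbc⟩
        · intro x; dsimp only; split_ifs <;> omega
        · intro x hx
          dsimp only at hx
          by_cases hxa : x = a
          · simp [hxa] at hx
          by_cases hxb : x = b
          · subst hxb; simp [hxa] at hx
          by_cases hxc : x = c
          · subst hxc; simp [hxa, hxb] at hx
          right
          rcases hdom x hxa hxb hxc with ⟨h1, h2⟩ | ⟨h1, h2⟩ | ⟨h1, h2⟩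
          · exact ⟨a, b, hab, h1.symm, h2.symm, by simp, by simp [hab.symm]⟩
          · exact ⟨a, c, hac, h1.symm, h2.symm, by simp, by simp [hac.symm, hbc.symm]⟩
          · exact ⟨b, c, hbc, h1.symm, h2.symm, by simp [hab.symm],
              by simp [hac.symm, hbc.symm]⟩
        · intro x hx
          dsimp only at hx
          by_cases hxa : x = a
          · subst hxa; exact ⟨b, hGab.symm, by simp [hab.symm]⟩
          by_cases hxb : x = b
          · subst hxb; exact ⟨a, hGab, by simp⟩
          by_cases hxc : x = c
          · subst hxc; exact ⟨b, hGbc, by simp [hab.symm]⟩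
          · simp [hxa, hxb, hxc] at hx
    refine le_antisymm (Nat.sInf_le h3mem) (le_csInf ⟨3, h3mem⟩ ?_)
    rintro w ⟨f, hf, hsum⟩
    have h2le : 2 ≤ ∑ v, f v := two_le_weight G hf
    by_contra hlt
    push_neg at hlt
    have hw2 : ∑ v, f v = 2 := by omega
    obtain ⟨a, b, hab, hua, hub⟩ := weight_two G hf hw2
    have hda := degree_of_univ G hua
    have hdb := degree_of_univ G hub
    rcases h with ⟨u, _, hu2⟩ | ⟨hmax, _⟩
    · exact hab ((hu2 a hda).trans (hu2 b hdb).symm)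
    · have := G.degree_le_maxDegree a
      rw [hda] at this
      omega
end

section
/- For every nontrivial connected graph G of order n with maximum degree Δ, γ_{tR2}(G) ≥ ⌈2n/(Δ+1)⌉. -/
/-!
Every vertex `v` sees weight at least `2` on its closed neighbourhood: if `f v = 0` this is the
Roman {2} condition, and if `f v > 0` then `v` has a positive neighbour. Summing over all `v`
counts each `f u` exactly `deg u + 1 ≤ Δ + 1` times, so `2 n ≤ (Δ + 1) · w(f)` for every TR2DF `f`.
-/

namespace SimpleGraph

variable {V : Type*} (G : SimpleGraph V)

lemma sum_sum_neighborFinset_eq_sum_degree_smul {M : Type*} [AddCommMonoid M] [Fintype V]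
    [DecidableRel G.Adj] (f : V → M) :
    ∑ v, ∑ u ∈ G.neighborFinset v, f u = ∑ u, G.degree u • f u := by
  rw [Finset.sum_comm' (t' := Finset.univ) (s' := fun u => G.neighborFinset u)
    (by simp [adj_comm])]
  simp only [Finset.sum_const, card_neighborFinset_eq_degree]

end SimpleGraph

namespace IsTR2DF

open SimpleGraph

variable {V : Type*} {G : SimpleGraph V} {f : V → ℕ}

lemma two_le_add_sum_neighborFinset (hf : IsTR2DF G f) (v : V) [Fintype (G.neighborSet v)] :
    2 ≤ f v + ∑ u ∈ G.neighborFinset v, f u := by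
  classical
  obtain ⟨-, hzero, htotal⟩ := hf
  have single_le {u : V} (hu : G.Adj u v) : f u ≤ ∑ u ∈ G.neighborFinset v, f u :=
    Finset.single_le_sum (fun _ _ => Nat.zero_le _) ((mem_neighborFinset G v u).2 hu.symm)
  rcases (f v).eq_zero_or_pos with hv | hv
  · rcases hzero v hv with ⟨u, hu, hu2⟩ | ⟨x, y, hxy, hx, hy, hx1, hy1⟩
    · linarith [single_le hu]
    · have hpair : ({x, y} : Finset V) ⊆ G.neighborFinset v := by
        simp [Finset.insert_subset_iff, hx.symm, hy.symm]
      have hxy_le := Finset.sum_le_sum_of_subset hpair (f := f)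
      rw [Finset.sum_pair hxy] at hxy_le
      omega
  · obtain ⟨u, hu, hu_pos⟩ := htotal v hv
    linarith [single_le hu]

lemma two_mul_card_le [Fintype V] [DecidableRel G.Adj] (hf : IsTR2DF G f) :
    2 * Fintype.card V ≤ (G.maxDegree + 1) * ∑ v, f v := by
  calc 2 * Fintype.card V = ∑ _v : V, 2 := by simp [mul_comm]
    _ ≤ ∑ v, (f v + ∑ u ∈ G.neighborFinset v, f u) :=
        Finset.sum_le_sum fun v _ => hf.two_le_add_sum_neighborFinset v
    _ = ∑ v, f v + ∑ u, G.degree u * f u := by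
        rw [Finset.sum_add_distrib, G.sum_sum_neighborFinset_eq_sum_degree_smul]
        simp only [smul_eq_mul]
    _ ≤ ∑ v, f v + ∑ u, G.maxDegree * f u := by
        gcongr with u
        exact G.degree_le_maxDegree u
    _ = (G.maxDegree + 1) * ∑ v, f v := by rw [← Finset.mul_sum]; ring

end IsTR2DF

lemma isTR2DF_const_two {V : Type*} {G : SimpleGraph V} (h : ∀ v, ∃ u, G.Adj u v) :
    IsTR2DF G fun _ => 2 :=
  ⟨fun _ => le_rfl, fun _ h => absurd h two_ne_zero,
    fun v _ => (h v).imp fun _ hu => ⟨hu, two_pos⟩⟩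

theorem stmt13 {V : Type*} [Fintype V] (G : SimpleGraph V) [DecidableRel G.Adj]
    (hconn : G.Connected) (hnt : Nontrivial V) :
    (2 * Fintype.card V + G.maxDegree) / (G.maxDegree + 1) ≤ tR2 G := by
  have hne : {w | ∃ f : V → ℕ, IsTR2DF G f ∧ ∑ v, f v = w}.Nonempty :=
    ⟨_, _, isTR2DF_const_two fun v =>
      (hconn.preconnected.exists_adj_of_nontrivial v).imp fun _ h => h.symm, rfl⟩
  refine le_csInf hne ?_
  rintro _ ⟨f, hf, rfl⟩
  have hweight := hf.two_mul_card_le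
  rw [Nat.div_le_iff_le_mul_add_pred (by positivity)]
  omega
end
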